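/- arXiv:1101.4591 — 2 statements merged into one kernel-verified Lean document; each statement's English description precedes it below -/
import Mathlib

section
/- Assume 0 < ε < 1/2 satisfies (1/2)·(1 − 2ε)^{−2}·(1 + 2ε) ≤ 1, that 0 < p ≤ 1 satisfies p^{k−1} B^k ≤ ε·8^{−k} for all k ≥ 2, and that |J_k| ≤ B^k for all k ≥ 2. If α* ∈ S is a fixed point of f (i.e. f(α*) = α*), then |α*_k| ≤ p ε · 4^{−k} for every k ≥ 2, and ‖α*‖ ≤ p ε / 2. -/
/-!
Since `k ≤ 2^k`, the norm dominates `|A(α)|`, so on `S` (with `p ≤ 1`) the factors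
`(1 - 2A)⁻²` and `|1 - 2A/p|` of `f(α)_k` are at most `(1 - 2ε)⁻²` and `1 + 2ε`, whose product
is at most `2`. A fixed point therefore satisfies
`|α_k| ≤ B^k p^k 2^k = p · (p^{k-1} B^k) · 2^k ≤ p ε 8^{-k} 2^k = p ε 4^{-k}`,
and then `‖α‖ ≤ p ε Σ_{k≥2} 2^{-k} = p ε / 2`.
-/

open scoped ENNReal

/-- The norm `‖α‖ = Σ_{k≥2} 2^k |α_k|`, valued in `[0,∞]` so that it is always defined;
membership in the space `S` below forces it to be finite. -/
noncomputable def seqNorm (α : ℕ → ℝ) : ℝ≥0∞ :=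
  ∑' k : ℕ, if 2 ≤ k then (2 : ℝ≥0∞) ^ k * ENNReal.ofReal |α k| else 0

/-- `A(α) = Σ_{k≥2} k α_k`. -/
noncomputable def seqA (α : ℕ → ℝ) : ℝ :=
  ∑' k : ℕ, if 2 ≤ k then (k : ℝ) * α k else 0

/-- The map `f(α)_k = J_k p^k (1 - 2A(α))^{-2k} (1 - 2A(α)/p)^k` for `k ≥ 2`
(entries of index `< 2` are irrelevant and set to `0`). -/
noncomputable def fMap (p : ℝ) (J : ℕ → ℝ) (α : ℕ → ℝ) : ℕ → ℝ := fun k =>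
  if 2 ≤ k then J k * p ^ k * ((1 - 2 * seqA α)⁻¹) ^ (2 * k) * (1 - 2 * seqA α / p) ^ k
  else 0

/-- The set `S = {α : ‖α‖ ≤ p ε}`. -/
def Sset (p ε : ℝ) : Set (ℕ → ℝ) := {α | seqNorm α ≤ ENNReal.ofReal (p * ε)}

lemma ofReal_abs_seqA_le_seqNorm (α : ℕ → ℝ) : ENNReal.ofReal |seqA α| ≤ seqNorm α := by
  rw [← Real.enorm_eq_ofReal_abs]
  refine enorm_tsum_le_tsum_enorm.trans (ENNReal.tsum_le_tsum fun k => ?_)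
  split_ifs
  · rw [enorm_mul, Real.enorm_eq_ofReal_abs (α k), Real.enorm_natCast]
    gcongr
    exact_mod_cast Nat.lt_two_pow_self.le
  · simp

lemma abs_seqA_le_of_mem_Sset {p ε : ℝ} {α : ℕ → ℝ} (hpε : 0 ≤ p * ε) (hα : α ∈ Sset p ε) :
    |seqA α| ≤ p * ε :=
  (ENNReal.ofReal_le_ofReal_iff hpε).1 ((ofReal_abs_seqA_le_seqNorm α).trans hα)

lemma abs_fMap_le {p ε : ℝ} {J α : ℕ → ℝ} (hp0 : 0 < p) (hp1 : p ≤ 1) (hε : ε < 1 / 2)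
    (hA : |seqA α| ≤ p * ε) (k : ℕ) :
    |fMap p J α k| ≤ |J k| * (p * (((1 - 2 * ε)⁻¹) ^ 2 * (1 + 2 * ε))) ^ k := by
  set A := seqA α
  have hε0 : 0 ≤ ε := nonneg_of_mul_nonneg_right ((abs_nonneg A).trans hA) hp0
  have hAε : |A| ≤ ε := hA.trans (mul_le_of_le_one_left hε0 hp1)
  have hsub : 1 - 2 * ε ≤ 1 - 2 * A := by linarith [le_abs_self A]
  have hsub0 : 0 < 1 - 2 * ε := by linarith
  have hinv0 : 0 ≤ (1 - 2 * A)⁻¹ := inv_nonneg.2 (hsub0.trans_le hsub).le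
  have hinv : (1 - 2 * A)⁻¹ ≤ (1 - 2 * ε)⁻¹ := inv_anti₀ hsub0 hsub
  have hquot : |1 - 2 * A / p| ≤ 1 + 2 * ε := by
    have : |2 * A / p| ≤ 2 * ε := by
      rw [abs_div, abs_of_pos hp0, abs_mul, abs_two, div_le_iff₀ hp0]
      linarith
    linarith [abs_sub (1 : ℝ) (2 * A / p), abs_one (α := ℝ)]
  unfold fMap
  split_ifs
  · rw [abs_mul, abs_mul, abs_mul, abs_pow, abs_pow, abs_pow, abs_of_pos hp0,
      abs_of_nonneg hinv0, mul_pow, mul_pow, ← pow_mul, mul_comm 2 k, mul_assoc, mul_assoc]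
    gcongr
  · simp only [abs_zero]
    positivity

lemma abs_mul_pow_le_of_pow_mul_pow_le {j p q B ε : ℝ} {k : ℕ} (hk : 1 ≤ k) (hp0 : 0 < p)
    (hq0 : 0 ≤ q) (hq : q ≤ 2) (hj : |j| ≤ B ^ k) (hpB : p ^ (k - 1) * B ^ k ≤ ε * (8 : ℝ)⁻¹ ^ k) :
    |j| * (p * q) ^ k ≤ p * ε * (4 : ℝ)⁻¹ ^ k := by
  have hpk : p ^ k = p * p ^ (k - 1) := by rw [← pow_succ', Nat.sub_add_cancel hk]
  calc |j| * (p * q) ^ k ≤ B ^ k * (p * q) ^ k := by gcongr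
    _ = p * (p ^ (k - 1) * B ^ k) * q ^ k := by rw [mul_pow, hpk]; ring
    _ ≤ p * (p ^ (k - 1) * B ^ k) * 2 ^ k := by
        have : 0 ≤ B ^ k := (abs_nonneg j).trans hj
        gcongr
    _ ≤ p * (ε * 8⁻¹ ^ k) * 2 ^ k := by gcongr
    _ = p * ε * 4⁻¹ ^ k := by
        rw [show (4 : ℝ)⁻¹ = 8⁻¹ * 2 by norm_num, mul_pow]; ring

lemma seqNorm_le_of_abs_le {α : ℕ → ℝ} {c : ℝ} (hc : 0 ≤ c)
    (hα : ∀ k, 2 ≤ k → |α k| ≤ c * (4 : ℝ)⁻¹ ^ k) : seqNorm α ≤ ENNReal.ofReal (c / 2) := by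
  have hsum : Summable fun k : ℕ => c * if 2 ≤ k then (2 : ℝ)⁻¹ ^ k else 0 := by
    simpa only [Set.indicator_apply, Set.mem_ofPred_eq, one_div] using
      (summable_geometric_two.indicator {k | 2 ≤ k}).mul_left c
  calc seqNorm α
      ≤ ∑' k : ℕ, ENNReal.ofReal (c * if 2 ≤ k then (2 : ℝ)⁻¹ ^ k else 0) := by
        refine ENNReal.tsum_le_tsum fun k => ?_
        split_ifs with hk
        · rw [← ENNReal.ofReal_ofNat, ← ENNReal.ofReal_pow zero_le_two,
            ← ENNReal.ofReal_mul (by positivity)]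
          apply ENNReal.ofReal_le_ofReal
          have h2 : (2 : ℝ) ^ k * 2⁻¹ ^ k = 1 := by rw [← mul_pow]; norm_num
          have h4 : (4 : ℝ)⁻¹ ^ k = 2⁻¹ ^ k * 2⁻¹ ^ k := by rw [← mul_pow]; norm_num
          calc (2 : ℝ) ^ k * |α k| ≤ 2 ^ k * (c * 4⁻¹ ^ k) := by gcongr; exact hα k hk
            _ = c * 2⁻¹ ^ k := by linear_combination (c * 2⁻¹ ^ k) * h2 + (2 ^ k * c) * h4
        · simp
    _ = ENNReal.ofReal (c / 2) := by
        rw [← ENNReal.ofReal_tsum_of_nonneg (fun k => by positivity) hsum, tsum_mul_left,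
          tsum_geometric_inv_two_ge]
        ring_nf

theorem stmt3_general (p ε B : ℝ) (J : ℕ → ℝ)
    (hε0 : 0 < ε) (hε : ε < 1 / 2)
    (hcond : (1 / 2) * ((1 - 2 * ε)⁻¹) ^ 2 * (1 + 2 * ε) ≤ 1)
    (hp0 : 0 < p) (hp1 : p ≤ 1)
    (hpB : ∀ k : ℕ, 2 ≤ k → p ^ (k - 1) * B ^ k ≤ ε * (8 : ℝ)⁻¹ ^ k)
    (hJ : ∀ k : ℕ, 2 ≤ k → |J k| ≤ B ^ k)
    (αstar : ℕ → ℝ) (hmem : αstar ∈ Sset p ε) (hfix : fMap p J αstar = αstar) :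
    (∀ k : ℕ, 2 ≤ k → |αstar k| ≤ p * ε * (4 : ℝ)⁻¹ ^ k) ∧
    seqNorm αstar ≤ ENNReal.ofReal (p * ε / 2) := by
  have hpε : 0 ≤ p * ε := by positivity
  have hA : |seqA αstar| ≤ p * ε := abs_seqA_le_of_mem_Sset hpε hmem
  have hq : ((1 - 2 * ε)⁻¹) ^ 2 * (1 + 2 * ε) ≤ 2 := by linarith
  have hcoord : ∀ k : ℕ, 2 ≤ k → |αstar k| ≤ p * ε * (4 : ℝ)⁻¹ ^ k := fun k hk => by
    rw [← hfix]
    exact (abs_fMap_le hp0 hp1 hε hA k).trans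
      (abs_mul_pow_le_of_pow_mul_pow_le (by omega) hp0 (by positivity) hq (hJ k hk) (hpB k hk))
  exact ⟨hcoord, seqNorm_le_of_abs_le hpε hcoord⟩

theorem stmt3 (p ε B : ℝ) (J : ℕ → ℝ)
    (hε0 : 0 < ε) (hε : ε < 1 / 2)
    (hcond : (1 / 2) * ((1 - 2 * ε)⁻¹) ^ 2 * (1 + 2 * ε) ≤ 1)
    (hp0 : 0 < p) (hp1 : p ≤ 1) (hB : 0 < B)
    (hpB : ∀ k : ℕ, 2 ≤ k → p ^ (k - 1) * B ^ k ≤ ε * (8 : ℝ)⁻¹ ^ k)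
    (hJ : ∀ k : ℕ, 2 ≤ k → |J k| ≤ B ^ k)
    (αstar : ℕ → ℝ) (hmem : αstar ∈ Sset p ε) (hfix : fMap p J αstar = αstar) :
    (∀ k : ℕ, 2 ≤ k → |αstar k| ≤ p * ε * (4 : ℝ)⁻¹ ^ k) ∧
    seqNorm αstar ≤ ENNReal.ofReal (p * ε / 2) :=
  stmt3_general p ε B J hε0 hε hcond hp0 hp1 hpB hJ αstar hmem hfix
end

section
/- Assume 0 < ε ≤ 1/2 and 0 < p ≤ 1, and let α = (α_k)_{k≥2} be a real sequence satisfying |α_k| ≤ p ε · 4^{−k} for all k ≥ 2. Then, with A(α) := Σ_{k≥2} k α_k, the quantity Λ := Σ_{i≥2} α_i − Σ_{k≥2} (1/k)·(2A(α))^k + (p/2)·Σ_{k≥2} (1/k)·(2A(α)/p)^k is well defined (all three series converge absolutely) and satisfies |Λ| ≤ p ε. -/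
set_option maxHeartbeats 1000000 in
lemma auxTail (f : ℕ → ℝ) (C r : ℝ) (hC : 0 ≤ C) (hr0 : 0 ≤ r) (hr1 : r < 1)
    (hf : ∀ k : ℕ, 2 ≤ k → |f k| ≤ C * r ^ k) :
    Summable (fun k : ℕ => if 2 ≤ k then |f k| else 0) ∧
    |∑' k : ℕ, if 2 ≤ k then f k else 0| ≤ C * r ^ 2 / (1 - r) := by
  have hgle : ∀ k : ℕ, |if 2 ≤ k then f k else 0| ≤ (if 2 ≤ k then C * r ^ k else 0) := by
    intro k
    by_cases hk : 2 ≤ k <;> simp [hk, hf k]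
  have hsum_geo : Summable (fun k : ℕ => C * r ^ k) :=
    (summable_geometric_of_lt_one hr0 hr1).mul_left C
  have hsum_h : Summable (fun k : ℕ => if 2 ≤ k then C * r ^ k else 0) := by
    apply Summable.of_nonneg_of_le _ _ hsum_geo <;> intro k <;>
      by_cases hk : 2 ≤ k <;> simp [hk, mul_nonneg hC (pow_nonneg hr0 k)]
  have hsum_absg : Summable (fun k : ℕ => |if 2 ≤ k then f k else 0|) :=
    Summable.of_nonneg_of_le (fun k => abs_nonneg _) hgle hsum_h
  have heq : (fun k : ℕ => if 2 ≤ k then |f k| else 0)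
      = fun k : ℕ => |if 2 ≤ k then f k else 0| := by
    funext k; by_cases hk : 2 ≤ k <;> simp [hk]
  refine ⟨heq ▸ hsum_absg, ?_⟩
  have h1 : |∑' k : ℕ, if 2 ≤ k then f k else 0|
      ≤ ∑' k : ℕ, |if 2 ≤ k then f k else 0| := by
    have := norm_tsum_le_tsum_norm (f := fun k : ℕ => if 2 ≤ k then f k else 0)
      (by simp only [Real.norm_eq_abs]; exact hsum_absg)
    simpa only [Real.norm_eq_abs] using this
  have h2 : (∑' k : ℕ, |if 2 ≤ k then f k else 0|)
      ≤ ∑' k : ℕ, (if 2 ≤ k then C * r ^ k else 0) :=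
    Summable.tsum_le_tsum hgle hsum_absg hsum_h
  have h3 : (∑' k : ℕ, (if 2 ≤ k then C * r ^ k else 0)) = C * r ^ 2 / (1 - r) := by
    have hsplit := Summable.sum_add_tsum_nat_add 2 hsum_h
    have hzero : (∑ i ∈ Finset.range 2, if 2 ≤ i then C * r ^ i else 0) = 0 := by
      simp [Finset.sum_range_succ]
    have htail : (∑' k : ℕ, (if 2 ≤ k + 2 then C * r ^ (k + 2) else 0))
        = C * r ^ 2 / (1 - r) := by
      have : ∀ k : ℕ, (if 2 ≤ k + 2 then C * r ^ (k + 2) else 0) = (C * r ^ 2) * r ^ k := by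
        intro k; simp [pow_add]; ring
      rw [tsum_congr this, tsum_mul_left, tsum_geometric_of_lt_one hr0 hr1]
      field_simp
    rw [← hsplit, hzero, zero_add, htail]
  linarith

lemma two_mul_le_two_pow (k : ℕ) (hk : 2 ≤ k) : 2 * k ≤ 2 ^ k := by
  induction k with
  | zero => omega
  | succ n ih =>
    rcases Nat.lt_or_ge n 2 with h | h
    · interval_cases n <;> simp [pow_succ]
    · have := ih h
      have : 2 ^ n ≥ 2 := by
        calc 2 ≤ 2 * n := by omega
        _ ≤ 2 ^ n := ih h
      calc 2 * (n + 1) = 2 * n + 2 := by ring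
        _ ≤ 2 ^ n + 2 ^ n := by omega
        _ = 2 ^ (n + 1) := by ring

set_option maxHeartbeats 2000000

theorem stmt5 (p ε : ℝ) (α : ℕ → ℝ)
    (hε0 : 0 < ε) (hε : ε ≤ 1 / 2)
    (hp0 : 0 < p) (hp1 : p ≤ 1)
    (hα : ∀ k : ℕ, 2 ≤ k → |α k| ≤ p * ε * (4 : ℝ)⁻¹ ^ k) :
    Summable (fun k : ℕ => if 2 ≤ k then |α k| else 0) ∧
    Summable (fun k : ℕ => if 2 ≤ k then |(1 / (k : ℝ)) * (2 * seqA α) ^ k| else 0) ∧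
    Summable (fun k : ℕ => if 2 ≤ k then |(1 / (k : ℝ)) * (2 * seqA α / p) ^ k| else 0) ∧
    |(∑' k : ℕ, if 2 ≤ k then α k else 0)
        - (∑' k : ℕ, if 2 ≤ k then (1 / (k : ℝ)) * (2 * seqA α) ^ k else 0)
        + (p / 2) * (∑' k : ℕ, if 2 ≤ k then (1 / (k : ℝ)) * (2 * seqA α / p) ^ k else 0)|
      ≤ p * ε := by
  have hpε0 : 0 < p * ε := mul_pos hp0 hε0
  have hpε : p * ε ≤ 1 / 2 := by nlinarith
  -- bound on seqA
  have hkα : ∀ k : ℕ, 2 ≤ k → |(k : ℝ) * α k| ≤ (p * ε / 2) * (1/2 : ℝ) ^ k := by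
    intro k hk
    have h1 : |(k : ℝ) * α k| = (k : ℝ) * |α k| := by
      rw [abs_mul, abs_of_nonneg (by positivity : (0:ℝ) ≤ (k:ℝ))]
    have h2 : (k : ℝ) * |α k| ≤ (k : ℝ) * (p * ε * (4 : ℝ)⁻¹ ^ k) := by
      apply mul_le_mul_of_nonneg_left (hα k hk) (by positivity)
    have h3 : (k : ℝ) * (1/2 : ℝ) ^ k ≤ 1/2 := by
      have := two_mul_le_two_pow k hk
      have h4 : (2 : ℝ) * k ≤ 2 ^ k := by exact_mod_cast this
      have h5 : (0:ℝ) < 2 ^ k := by positivity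
      rw [div_pow, one_pow, mul_one_div, div_le_div_iff₀ h5 (by norm_num : (0:ℝ) < 2)]
      linarith
    have h6 : ((4 : ℝ)⁻¹) ^ k = (1/2 : ℝ) ^ k * (1/2 : ℝ) ^ k := by
      rw [← mul_pow]; norm_num
    calc |(k : ℝ) * α k| = (k : ℝ) * |α k| := h1
      _ ≤ (k : ℝ) * (p * ε * ((1/2:ℝ)^k * (1/2:ℝ)^k)) := by rw [← h6]; exact h2
      _ = (p * ε) * ((k : ℝ) * (1/2:ℝ)^k) * (1/2:ℝ)^k := by ring
      _ ≤ (p * ε) * (1/2) * (1/2:ℝ)^k := by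
          apply mul_le_mul_of_nonneg_right _ (by positivity)
          apply mul_le_mul_of_nonneg_left h3 (le_of_lt hpε0)
      _ = (p * ε / 2) * (1/2 : ℝ) ^ k := by ring
  have hA := auxTail (fun k : ℕ => (k : ℝ) * α k) (p * ε / 2) (1/2) (by positivity)
    (by norm_num) (by norm_num) hkα
  have hAbound : |seqA α| ≤ p * ε / 4 := by
    have := hA.2
    rw [seqA]
    calc |∑' k : ℕ, if 2 ≤ k then (k : ℝ) * α k else 0|
        ≤ (p * ε / 2) * (1/2 : ℝ) ^ 2 / (1 - 1/2) := this
      _ = p * ε / 4 := by ring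
  set A := seqA α with hAdef
  -- piece 1: α itself
  have hα' : ∀ k : ℕ, 2 ≤ k → |α k| ≤ (p * ε) * (1/4 : ℝ) ^ k := by
    intro k hk
    have := hα k hk
    simpa [one_div] using this
  have h1 := auxTail α (p * ε) (1/4) (le_of_lt hpε0) (by norm_num) (by norm_num) hα'
  -- piece 2
  have hx : |2 * A| ≤ p * ε / 2 := by
    rw [abs_mul]
    calc |(2:ℝ)| * |A| = 2 * |A| := by norm_num
      _ ≤ 2 * (p * ε / 4) := by linarith [hAbound]
      _ = p * ε / 2 := by ring
  have hxlt : |2 * A| < 1 := by linarith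
  have hf2 : ∀ k : ℕ, 2 ≤ k → |(1 / (k : ℝ)) * (2 * A) ^ k| ≤ (1/2 : ℝ) * |2 * A| ^ k := by
    intro k hk
    have hk2 : (2 : ℝ) ≤ (k : ℝ) := by exact_mod_cast hk
    rw [abs_mul, abs_pow]
    apply mul_le_mul_of_nonneg_right _ (pow_nonneg (abs_nonneg _) k)
    rw [abs_of_nonneg (by positivity : (0:ℝ) ≤ 1 / (k:ℝ))]
    rw [div_le_div_iff₀ (by linarith) (by norm_num)]
    linarith
  have h2 := auxTail (fun k : ℕ => (1 / (k : ℝ)) * (2 * A) ^ k) (1/2) |2 * A|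
    (by norm_num) (abs_nonneg _) hxlt hf2
  -- piece 3
  have hy : |2 * A / p| ≤ ε / 2 := by
    rw [abs_div, abs_of_pos hp0, div_le_iff₀ hp0]
    calc |2 * A| ≤ p * ε / 2 := hx
      _ = ε / 2 * p := by ring
  have hylt : |2 * A / p| < 1 := by linarith
  have hf3 : ∀ k : ℕ, 2 ≤ k → |(1 / (k : ℝ)) * (2 * A / p) ^ k| ≤ (1/2 : ℝ) * |2 * A / p| ^ k := by
    intro k hk
    have hk2 : (2 : ℝ) ≤ (k : ℝ) := by exact_mod_cast hk
    rw [abs_mul, abs_pow]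
    apply mul_le_mul_of_nonneg_right _ (pow_nonneg (abs_nonneg _) k)
    rw [abs_of_nonneg (by positivity : (0:ℝ) ≤ 1 / (k:ℝ))]
    rw [div_le_div_iff₀ (by linarith) (by norm_num)]
    linarith
  have h3 := auxTail (fun k : ℕ => (1 / (k : ℝ)) * (2 * A / p) ^ k) (1/2) |2 * A / p|
    (by norm_num) (abs_nonneg _) hylt hf3
  refine ⟨h1.1, h2.1, h3.1, ?_⟩
  -- numeric bounds
  have b1 : |∑' k : ℕ, if 2 ≤ k then α k else 0| ≤ p * ε / 12 := by
    calc |∑' k : ℕ, if 2 ≤ k then α k else 0|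
        ≤ (p * ε) * (1/4 : ℝ) ^ 2 / (1 - 1/4) := h1.2
      _ = p * ε / 12 := by ring
  have hx0 : (0:ℝ) ≤ |2 * A| := abs_nonneg _
  have b2 : |∑' k : ℕ, if 2 ≤ k then (1 / (k : ℝ)) * (2 * A) ^ k else 0| ≤ p * ε / 12 := by
    have := h2.2
    have hden : (3/4 : ℝ) ≤ 1 - |2 * A| := by
      have : |2 * A| ≤ 1/4 := by linarith
      linarith
    have hb : (1/2 : ℝ) * |2 * A| ^ 2 / (1 - |2 * A|) ≤ p * ε / 12 := by
      rw [div_le_iff₀ (by linarith)]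
      nlinarith [sq_nonneg (|2 * A|), hpε, hpε0, hx]
    linarith
  have hy0 : (0:ℝ) ≤ |2 * A / p| := abs_nonneg _
  have b3 : |∑' k : ℕ, if 2 ≤ k then (1 / (k : ℝ)) * (2 * A / p) ^ k else 0| ≤ ε * ε / 6 := by
    have := h3.2
    have hden : (3/4 : ℝ) ≤ 1 - |2 * A / p| := by
      have : |2 * A / p| ≤ 1/4 := by linarith
      linarith
    have hb : (1/2 : ℝ) * |2 * A / p| ^ 2 / (1 - |2 * A / p|) ≤ ε * ε / 6 := by
      rw [div_le_iff₀ (by linarith)]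
      nlinarith [hy, hε0, hε]
    linarith
  have hfinal := abs_add_le ((∑' k : ℕ, if 2 ≤ k then α k else 0)
        - (∑' k : ℕ, if 2 ≤ k then (1 / (k : ℝ)) * (2 * A) ^ k else 0))
      ((p / 2) * (∑' k : ℕ, if 2 ≤ k then (1 / (k : ℝ)) * (2 * A / p) ^ k else 0))
  have hsub := abs_sub (∑' k : ℕ, if 2 ≤ k then α k else 0)
      (∑' k : ℕ, if 2 ≤ k then (1 / (k : ℝ)) * (2 * A) ^ k else 0)
  have hmul : |(p / 2) * (∑' k : ℕ, if 2 ≤ k then (1 / (k : ℝ)) * (2 * A / p) ^ k else 0)|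
      ≤ (p / 2) * (ε * ε / 6) := by
    rw [abs_mul, abs_of_pos (by linarith : (0:ℝ) < p / 2)]
    apply mul_le_mul_of_nonneg_left b3 (by linarith)
  calc |(∑' k : ℕ, if 2 ≤ k then α k else 0)
        - (∑' k : ℕ, if 2 ≤ k then (1 / (k : ℝ)) * (2 * A) ^ k else 0)
        + (p / 2) * (∑' k : ℕ, if 2 ≤ k then (1 / (k : ℝ)) * (2 * A / p) ^ k else 0)|
      ≤ |(∑' k : ℕ, if 2 ≤ k then α k else 0)
        - (∑' k : ℕ, if 2 ≤ k then (1 / (k : ℝ)) * (2 * A) ^ k else 0)|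
        + |(p / 2) * (∑' k : ℕ, if 2 ≤ k then (1 / (k : ℝ)) * (2 * A / p) ^ k else 0)| := hfinal
    _ ≤ (p * ε / 12 + p * ε / 12) + (p / 2) * (ε * ε / 6) := by
        have : |(∑' k : ℕ, if 2 ≤ k then α k else 0)
          - (∑' k : ℕ, if 2 ≤ k then (1 / (k : ℝ)) * (2 * A) ^ k else 0)|
          ≤ p * ε / 12 + p * ε / 12 := (abs_sub _ _).trans (by linarith)
        linarith [hmul]
    _ ≤ p * ε := by nlinarith
end
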